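/- In a PET, if p and q are sharp effects with p orthogonal to q (p + q defined), then p + q is sharp and is the least upper bound of p and q among all effects. -/

import Mathlib

universe u v

/-- An effect algebra: a set with a partially defined commutative associative
addition (encoded via `Option`), a zero, a one, such that `x + 0 = x`,
`x + 1` defined implies `x = 0`, and every element has a unique complement. -/
structure EffectAlgebra (E : Type u) where
  add : E → E → Option E
  zero : E
  one : E
  add_comm' : ∀ x y, add x y = add y x
  add_assoc' : ∀ x y z xy xyz, add x y = some xy → add xy z = some xyz →
      ∃ yz, add y z = some yz ∧ add x yz = some xyz
  add_zero' : ∀ x, add x zero = some x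
  one_max : ∀ x y, add x one = some y → x = zero
  compl_exists : ∀ x, ∃ y, add x y = some one
  compl_unique : ∀ x y₁ y₂, add x y₁ = some one → add x y₂ = some one → y₁ = y₂

namespace EffectAlgebra

variable {E : Type u} (a : EffectAlgebra E)

/-- The natural order: `x ≤ y` iff there is `z` with `x + z = y`. -/
def le (x y : E) : Prop := ∃ z, a.add x z = some y

/-- The complement `x⊥`: the unique element with `x + x⊥ = 1`. -/
noncomputable def compl (x : E) : E := Classical.choose (a.compl_exists x)

theorem compl_spec (x : E) : a.add x (a.compl x) = some a.one :=
  Classical.choose_spec (a.compl_exists x)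

end EffectAlgebra

open CategoryTheory

/-- An effect theory: a category with a designated trivial system `I` such
that each `Eff(A) := Hom(A, I)` is an effect algebra and precomposition
preserves zero and partial sums. -/
structure EffectTheory (C : Type u) [Category.{v} C] where
  I : C
  ea : ∀ A : C, EffectAlgebra (A ⟶ I)
  comp_zero : ∀ {A B : C} (g : B ⟶ A), g ≫ (ea A).zero = (ea B).zero
  comp_add : ∀ {A B : C} (g : B ⟶ A) (p q s : A ⟶ I),
      (ea A).add p q = some s → (ea B).add (g ≫ p) (g ≫ q) = some (g ≫ s)

namespace EffectTheory

variable {C : Type u} [Category.{v} C] (E : EffectTheory C)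

/-- `q` is the image of `f`: the least effect with `q ∘ f = 1 ∘ f`. -/
def IsImage {A B : C} (f : A ⟶ B) (q : B ⟶ E.I) : Prop :=
  f ≫ q = f ≫ (E.ea B).one ∧
    ∀ r : B ⟶ E.I, f ≫ r = f ≫ (E.ea B).one → (E.ea B).le q r

/-- An effect is sharp when it is the image of some map. -/
def Sharp {A : C} (q : A ⟶ E.I) : Prop := ∃ (B : C) (f : B ⟶ A), E.IsImage f q

/-- `π` is a compression for the effect `q`: `1 ∘ π = q ∘ π`, and `π` is final
with this property. -/
def IsCompression {B A : C} (π : B ⟶ A) (q : A ⟶ E.I) : Prop :=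
  π ≫ (E.ea A).one = π ≫ q ∧
    ∀ {D : C} (f : D ⟶ A), f ≫ (E.ea A).one = f ≫ q → ∃! g : D ⟶ B, f = g ≫ π

/-- `ξ` is a filter for the effect `q`: `1 ∘ ξ ≤ q`, and `ξ` is initial with
this property. -/
def IsFilter {A B : C} (ξ : A ⟶ B) (q : A ⟶ E.I) : Prop :=
  (E.ea A).le (ξ ≫ (E.ea B).one) q ∧
    ∀ {D : C} (f : A ⟶ D), (E.ea A).le (f ≫ (E.ea D).one) q → ∃! g : B ⟶ D, f = ξ ≫ g

/-- A map is pure when it is a filter followed by a compression. -/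
def Pure {A B : C} (f : A ⟶ B) : Prop :=
  ∃ (D : C) (q : A ⟶ E.I) (r : B ⟶ E.I) (ξ : A ⟶ D) (π : D ⟶ B),
    E.IsFilter ξ q ∧ E.IsCompression π r ∧ f = ξ ≫ π

end EffectTheory

/-- A pure effect theory (PET): an effect theory in which every effect has a
filter and a compression, every map has an image, the negation of a sharp
effect is sharp, the pure maps form a dagger category, filters and
compressions of sharp effects are adjoint, and compressions of sharp effects
are isometries. -/
structure PET {C : Type u} [Category.{v} C] (E : EffectTheory C) where
  compObj : ∀ {A : C}, (A ⟶ E.I) → C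
  compr : ∀ {A : C} (q : A ⟶ E.I), compObj q ⟶ A
  compr_is : ∀ {A : C} (q : A ⟶ E.I), E.IsCompression (compr q) q
  filtObj : ∀ {A : C}, (A ⟶ E.I) → C
  filt : ∀ {A : C} (q : A ⟶ E.I), A ⟶ filtObj q
  filt_is : ∀ {A : C} (q : A ⟶ E.I), E.IsFilter (filt q) q
  im : ∀ {A B : C}, (A ⟶ B) → (B ⟶ E.I)
  im_is : ∀ {A B : C} (f : A ⟶ B), E.IsImage f (im f)
  dag : ∀ {A B : C}, (A ⟶ B) → (B ⟶ A)
  pure_id : ∀ A : C, E.Pure (𝟙 A)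
  pure_comp : ∀ {A B D : C} (f : A ⟶ B) (g : B ⟶ D), E.Pure f → E.Pure g → E.Pure (f ≫ g)
  pure_dag : ∀ {A B : C} (f : A ⟶ B), E.Pure f → E.Pure (dag f)
  dag_dag : ∀ {A B : C} (f : A ⟶ B), E.Pure f → dag (dag f) = f
  dag_id : ∀ A : C, dag (𝟙 A) = 𝟙 A
  dag_comp : ∀ {A B D : C} (f : A ⟶ B) (g : B ⟶ D), E.Pure f → E.Pure g →
      dag (f ≫ g) = dag g ≫ dag f
  sharp_compl : ∀ {A : C} (q : A ⟶ E.I), E.Sharp q → E.Sharp ((E.ea A).compl q)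
  dag_compr_filt : ∀ {A B : C} (π : B ⟶ A) (q : A ⟶ E.I), E.Sharp q →
      E.IsCompression π q → E.IsFilter (dag π) q
  dag_filt_compr : ∀ {A B : C} (ξ : A ⟶ B) (q : A ⟶ E.I), E.Sharp q →
      E.IsFilter ξ q → E.IsCompression (dag ξ) q
  compr_isometry : ∀ {A B : C} (π : B ⟶ A) (q : A ⟶ E.I), E.Sharp q →
      E.IsCompression π q → π ≫ dag π = 𝟙 B

namespace PET

variable {C : Type u} [Category.{v} C] {E : EffectTheory C} (P : PET E)

/-- The assert map of an effect `p`: `asrt_p := π_p ∘ π_p†`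
(in diagrammatic order, `π_p†` followed by `π_p`). -/
def asrt {A : C} (p : A ⟶ E.I) : A ⟶ A := P.dag (P.compr p) ≫ P.compr p

end PET

/-!
Write `⌊s⌋` for the image of the compression `π_s`. It is sharp, lies below `s`, and lies above
every sharp effect below `s`, since such an effect is the image of a map that factors through
`π_s`. So it suffices that `p + q` is the least upper bound of `p` and `q`: then `p, q ≤ ⌊s⌋`
forces `s ≤ ⌊s⌋`, whence `s = ⌊s⌋` is sharp.

For the bound, let `q` be the image of `f`, and `p + t = r` with `q ≤ r`. Then `f ∘ r = f ∘ 1`,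
while `p ≤ q⊥` gives `f ∘ p = 0`; hence `f ∘ t = f ∘ 1`, so `q ≤ t` and `p + q ≤ p + t = r`.
-/

namespace EffectAlgebra

variable {E : Type u} (a : EffectAlgebra E)

theorem zero_add (x : E) : a.add a.zero x = some x := by
  rw [a.add_comm']
  exact a.add_zero' x

theorem add_left_cancel {x y₁ y₂ d : E} (h₁ : a.add x y₁ = some d)
    (h₂ : a.add x y₂ = some d) : y₁ = y₂ := by
  obtain ⟨u, hu⟩ := a.compl_exists d
  obtain ⟨w₁, hw₁, hxw₁⟩ := a.add_assoc' y₁ x u d a.one (by rwa [a.add_comm']) hu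
  obtain ⟨w₂, hw₂, hxw₂⟩ := a.add_assoc' y₂ x u d a.one (by rwa [a.add_comm']) hu
  obtain rfl : w₁ = w₂ := Option.some.inj (hw₁.symm.trans hw₂)
  exact a.compl_unique w₁ y₁ y₂ (by rwa [a.add_comm']) (by rwa [a.add_comm'])

theorem eq_zero_of_add_eq_zero {x z : E} (h : a.add x z = some a.zero) : x = a.zero := by
  obtain ⟨w, hw, hxw⟩ := a.add_assoc' x z a.one a.zero a.one h (a.zero_add a.one)
  obtain rfl : z = a.zero := a.one_max z w hw
  obtain rfl : w = a.one := (Option.some.inj ((a.zero_add a.one).symm.trans hw)).symm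
  exact a.one_max x a.one hxw

theorem le_antisymm {x y : E} (hxy : a.le x y) (hyx : a.le y x) : x = y := by
  obtain ⟨u, hu⟩ := hxy
  obtain ⟨v, hv⟩ := hyx
  obtain ⟨w, hw, hxw⟩ := a.add_assoc' x u v y x hu hv
  obtain rfl : w = a.zero := a.add_left_cancel hxw (a.add_zero' x)
  obtain rfl : u = a.zero := a.eq_zero_of_add_eq_zero hw
  rw [a.add_zero'] at hu
  exact Option.some.inj hu

theorem le_compl_of_add {x y s : E} (h : a.add x y = some s) : a.le x (a.compl y) := by
  obtain ⟨w, hw, hyw⟩ :=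
    a.add_assoc' y x (a.compl s) s a.one (by rwa [a.add_comm']) (a.compl_spec s)
  obtain rfl : w = a.compl y := a.compl_unique y w (a.compl y) hyw (a.compl_spec y)
  exact ⟨a.compl s, hw⟩

theorem add_le_add_left {x y₁ y₂ s₁ s₂ : E} (h₁ : a.add x y₁ = some s₁)
    (h₂ : a.add x y₂ = some s₂) (hy : a.le y₁ y₂) : a.le s₁ s₂ := by
  obtain ⟨v, hv⟩ := hy
  obtain ⟨w, hw, hvw⟩ :=
    a.add_assoc' v y₁ x y₂ s₂ (by rwa [a.add_comm']) (by rwa [a.add_comm'])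
  obtain rfl : w = s₁ := Option.some.inj (hw.symm.trans ((a.add_comm' _ _).trans h₁))
  exact ⟨v, by rwa [a.add_comm']⟩

end EffectAlgebra

namespace EffectTheory

variable {C : Type u} [Category.{v} C] (E : EffectTheory C)

theorem comp_eq_comp_one_of_le {A B : C} (g : B ⟶ A) {x y : A ⟶ E.I}
    (hx : g ≫ x = g ≫ (E.ea A).one) (hxy : (E.ea A).le x y) :
    g ≫ y = g ≫ (E.ea A).one := by
  obtain ⟨u, hu⟩ := hxy
  have hsum := E.comp_add g x u y hu
  obtain ⟨w, hw, hxw⟩ := (E.ea B).add_assoc' _ _ _ _ _ hsum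
    (E.comp_add g y ((E.ea A).compl y) (E.ea A).one ((E.ea A).compl_spec y))
  rw [hx] at hxw
  obtain rfl : w = (E.ea B).zero := (E.ea B).add_left_cancel hxw ((E.ea B).add_zero' _)
  rw [hx, (E.ea B).eq_zero_of_add_eq_zero hw, (E.ea B).add_zero'] at hsum
  exact (Option.some.inj hsum).symm

theorem comp_eq_zero_of_le {A B : C} (g : B ⟶ A) {x y : A ⟶ E.I}
    (hy : g ≫ y = (E.ea B).zero) (hxy : (E.ea A).le x y) : g ≫ x = (E.ea B).zero := by
  obtain ⟨u, hu⟩ := hxy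
  have hsum := E.comp_add g x u y hu
  rw [hy] at hsum
  exact (E.ea B).eq_zero_of_add_eq_zero hsum

theorem comp_compl_eq_zero {A B : C} (g : B ⟶ A) {x : A ⟶ E.I}
    (hx : g ≫ x = g ≫ (E.ea A).one) : g ≫ (E.ea A).compl x = (E.ea B).zero := by
  have hsum := E.comp_add g x ((E.ea A).compl x) (E.ea A).one ((E.ea A).compl_spec x)
  rw [hx] at hsum
  exact (E.ea B).add_left_cancel hsum ((E.ea B).add_zero' _)

variable {E} in
theorem IsImage.le_of_add_eq {A B : C} {f : B ⟶ A} {p q t r : A ⟶ E.I}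
    (hf : E.IsImage f q) (hpq : (E.ea A).le p ((E.ea A).compl q))
    (hpt : (E.ea A).add p t = some r) (hqr : (E.ea A).le q r) : (E.ea A).le q t := by
  have hfp : f ≫ p = (E.ea B).zero :=
    E.comp_eq_zero_of_le f (E.comp_compl_eq_zero f hf.1) hpq
  have hsum := E.comp_add f p t r hpt
  rw [hfp, E.comp_eq_comp_one_of_le f hf.1 hqr, (E.ea B).zero_add] at hsum
  exact hf.2 t (Option.some.inj hsum)

theorem add_le_of_le_of_le {A : C} {p q s r : A ⟶ E.I} (hq : E.Sharp q)
    (hs : (E.ea A).add p q = some s) (hpr : (E.ea A).le p r) (hqr : (E.ea A).le q r) :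
    (E.ea A).le s r := by
  obtain ⟨_, _, hf⟩ := hq
  obtain ⟨t, hpt⟩ := hpr
  exact (E.ea A).add_le_add_left hs hpt
    (hf.le_of_add_eq ((E.ea A).le_compl_of_add hs) hpt hqr)

end EffectTheory

namespace PET

variable {C : Type u} [Category.{v} C] {E : EffectTheory C} (P : PET E)

/-- The largest sharp effect below `s`. -/
def floor {A : C} (s : A ⟶ E.I) : A ⟶ E.I := P.im (P.compr s)

theorem sharp_floor {A : C} (s : A ⟶ E.I) : E.Sharp (P.floor s) :=
  ⟨_, _, P.im_is (P.compr s)⟩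

theorem floor_le {A : C} (s : A ⟶ E.I) : (E.ea A).le (P.floor s) s :=
  (P.im_is (P.compr s)).2 s (P.compr_is s).1.symm

theorem le_floor_of_sharp {A : C} {x s : A ⟶ E.I} (hx : E.Sharp x) (hxs : (E.ea A).le x s) :
    (E.ea A).le x (P.floor s) := by
  obtain ⟨_, g, hg⟩ := hx
  obtain ⟨h, rfl, -⟩ :=
    (P.compr_is s).2 g (E.comp_eq_comp_one_of_le g hg.1 hxs).symm
  refine hg.2 _ ?_
  rw [Category.assoc, Category.assoc]
  exact h ≫= (P.im_is (P.compr s)).1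

end PET

/-- In a PET, if `p` and `q` are orthogonal sharp effects
(`p + q` is defined), then `p + q` is sharp and is the least upper bound of
`p` and `q` among all effects. -/
theorem pet_sharp_add_sharp_lub {C : Type u} [Category.{v} C] {E : EffectTheory C}
    (P : PET E) {A : C} (p q s : A ⟶ E.I) (hp : E.Sharp p) (hq : E.Sharp q)
    (hs : (E.ea A).add p q = some s) :
    E.Sharp s ∧ (E.ea A).le p s ∧ (E.ea A).le q s ∧
      ∀ r : A ⟶ E.I, (E.ea A).le p r → (E.ea A).le q r → (E.ea A).le s r := by
  have hps : (E.ea A).le p s := ⟨q, hs⟩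
  have hqs : (E.ea A).le q s := ⟨p, by rwa [(E.ea A).add_comm']⟩
  have hlub : ∀ r, (E.ea A).le p r → (E.ea A).le q r → (E.ea A).le s r :=
    fun _ => E.add_le_of_le_of_le hq hs
  have hs_floor : s = P.floor s :=
    (E.ea A).le_antisymm
      (hlub _ (P.le_floor_of_sharp hp hps) (P.le_floor_of_sharp hq hqs)) (P.floor_le s)
  exact ⟨hs_floor ▸ P.sharp_floor s, hps, hqs, hlub⟩
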